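/- Consider P patients where each patient p is either computed locally (u_p = 1) or on exactly one fog server. Define the system utility U = λ₁·Δ − λ₂·J, where Δ = Σ_p ((u_p)·l + (1−u_p)·m) − k·F − g·Σ_p (1−u_p)·β_p and J = Σ_p ρ_p·(u_p·β_p/Υ + (1−u_p)·(η_p/BR(p, f(p)) + β_p·n_{f(p)}/Γ)) with n_f the number of patients assigned to server f and f(p) the server of patient p. Suppose in configuration C a patient p is computed locally and fog server f serves the set 𝒫^f of n_f patients, and configuration C' is obtained from C by assigning p to f (all other patients unchanged, so f now serves n_f + 1 patients). Then U(C') − U(C) = λ₁·(m − l − g·β_p) + λ₂·ρ_p·(β_p/Υ − (β_p·(n_f+1)/Γ + η_p/BR(p,f))) − λ₂·Σ_{p' ∈ 𝒫^f} ρ_{p'}·β_{p'}/Γ. -/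
import Mathlib


/-- A configuration assigns each patient either to local computation (`none`)
or to exactly one fog server (`some f`).  `nload c f` is the number of patients
assigned to fog server `f`. -/
def nload (P F : ℕ) (c : Fin P → Option (Fin F)) (f : Fin F) : ℕ :=
  (Finset.univ.filter (fun p' => c p' = some f)).card

/-- The medical center's profit `Δ` of a configuration. -/
noncomputable def profit (P F : ℕ) (l m k g : ℝ) (β : Fin P → ℝ)
    (c : Fin P → Option (Fin F)) : ℝ :=
  (∑ p, (if c p = none then l else m)) - k * (F : ℝ) -
    g * ∑ p, (if c p = none then 0 else β p)

/-- The criticality-weighted patients' cost `J` of a configuration. -/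
noncomputable def patientCost (P F : ℕ) (Υ Γ : ℝ) (ρ η β : Fin P → ℝ)
    (BR : Fin P → Fin F → ℝ) (c : Fin P → Option (Fin F)) : ℝ :=
  ∑ p, ρ p * ((c p).elim (β p / Υ)
    (fun f => η p / BR p f + β p * (nload P F c f : ℝ) / Γ))

/-- The system utility `U = λ₁·Δ − λ₂·J`. -/
noncomputable def utility (P F : ℕ) (lam₁ lam₂ l m k g Υ Γ : ℝ) (ρ η β : Fin P → ℝ)
    (BR : Fin P → Fin F → ℝ) (c : Fin P → Option (Fin F)) : ℝ :=
  lam₁ * profit P F l m k g β c - lam₂ * patientCost P F Υ Γ ρ η β BR c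

/-- moving a locally computed patient `p₀` onto fog server `f`
(leaving all other patients unchanged) changes the system utility by exactly
`λ₁·(m − l − g·β p₀) + λ₂·ρ p₀·(β p₀/Υ − (β p₀·(n_f+1)/Γ + η p₀/BR(p₀,f)))
 − λ₂·Σ_{p' ∈ 𝒫^f} ρ p'·β p'/Γ`. -/
theorem utility_change_local_to_fog
    (P F : ℕ) (lam₁ lam₂ l m k g Υ Γ : ℝ) (ρ η β : Fin P → ℝ)
    (BR : Fin P → Fin F → ℝ)
    (hlam₁ : 0 ≤ lam₁) (hlam₂ : 0 ≤ lam₂) (hΥ : 0 < Υ) (hΓ : 0 < Γ)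
    (hBR : ∀ p f, 0 < BR p f)
    (c : Fin P → Option (Fin F)) (p₀ : Fin P) (f : Fin F)
    (hlocal : c p₀ = none) :
    utility P F lam₁ lam₂ l m k g Υ Γ ρ η β BR (Function.update c p₀ (some f)) -
        utility P F lam₁ lam₂ l m k g Υ Γ ρ η β BR c =
      lam₁ * (m - l - g * β p₀) +
        lam₂ * ρ p₀ * (β p₀ / Υ -
          (β p₀ * ((nload P F c f : ℝ) + 1) / Γ + η p₀ / BR p₀ f)) -
        lam₂ * ∑ p' ∈ Finset.univ.filter (fun p' => c p' = some f),
          ρ p' * β p' / Γ := by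
  set c' := Function.update c p₀ (some f) with hc'
  have hc'app : ∀ p, c' p = if p = p₀ then some f else c p := by
    intro p; simp [hc', Function.update_apply]
  have hnload : ∀ f' : Fin F, (nload P F c' f' : ℝ) =
      (nload P F c f' : ℝ) + (if f' = f then 1 else 0) := by
    intro f'
    by_cases hf : f' = f
    · subst hf
      have hset : (Finset.univ.filter (fun p' => c' p' = some f')) =
          insert p₀ (Finset.univ.filter (fun p' => c p' = some f')) := by
        ext p
        by_cases hp : p = p₀ <;> simp [hc'app, hp, hlocal]
      have hnot : p₀ ∉ (Finset.univ.filter (fun p' => c p' = some f')) := by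
        simp [hlocal]
      simp [nload, hset, Finset.card_insert_of_notMem hnot]
    · have hset : (Finset.univ.filter (fun p' => c' p' = some f')) =
          (Finset.univ.filter (fun p' => c p' = some f')) := by
        ext p
        simp only [Finset.mem_filter, Finset.mem_univ, true_and, hc'app]
        by_cases hp : p = p₀
        · simp [hp, hlocal]
          exact fun h => hf h.symm
        · simp [hp]
      simp [nload, hset, hf]
  -- profit difference
  have hprofit : profit P F l m k g β c' - profit P F l m k g β c
      = (m - l) - g * β p₀ := by
    unfold profit
    have h1 : (∑ p, (if c' p = none then l else m)) - (∑ p, (if c p = none then l else m))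
        = m - l := by
      rw [← Finset.sum_sub_distrib]
      rw [Finset.sum_eq_single p₀]
      · simp [hc'app, hlocal]
      · intro p _ hp; simp [hc'app, hp]
      · simp
    have h2 : (∑ p, (if c' p = none then (0:ℝ) else β p)) - (∑ p, (if c p = none then 0 else β p))
        = β p₀ := by
      rw [← Finset.sum_sub_distrib]
      rw [Finset.sum_eq_single p₀]
      · simp [hc'app, hlocal]
      · intro p _ hp; simp [hc'app, hp]
      · simp
    linear_combination h1 - g * h2
  -- patient cost difference
  have hcost : patientCost P F Υ Γ ρ η β BR c' - patientCost P F Υ Γ ρ η β BR c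
      = ρ p₀ * (η p₀ / BR p₀ f + β p₀ * ((nload P F c f : ℝ) + 1) / Γ - β p₀ / Υ)
        + ∑ p' ∈ Finset.univ.filter (fun p' => c p' = some f), ρ p' * β p' / Γ := by
    unfold patientCost
    rw [← Finset.sum_sub_distrib]
    have hterm : ∀ p : Fin P,
        ρ p * ((c' p).elim (β p / Υ)
          (fun f' => η p / BR p f' + β p * (nload P F c' f' : ℝ) / Γ))
        - ρ p * ((c p).elim (β p / Υ)
          (fun f' => η p / BR p f' + β p * (nload P F c f' : ℝ) / Γ))
        = (if p = p₀ then
            ρ p₀ * (η p₀ / BR p₀ f + β p₀ * ((nload P F c f : ℝ) + 1) / Γ - β p₀ / Υ)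
          else 0)
          + (if c p = some f then ρ p * β p / Γ else 0) := by
      intro p
      by_cases hp : p = p₀
      · subst hp
        simp [hc'app, hlocal, hnload]
        ring
      · rw [hc'app, if_neg hp]
        cases hcp : c p with
        | none => simp [hcp, hp]
        | some f' =>
          simp only [Option.elim, hnload f']
          by_cases hf : f' = f
          · subst hf
            simp [hcp, hp]
            ring
          · simp [hcp, hp, hf, fun h : some f' = some f => hf (Option.some.inj h)]
    rw [Finset.sum_congr rfl (fun p _ => hterm p), Finset.sum_add_distrib]
    congr 1
    · simp
    · exact (Finset.sum_filter _ _).symm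
  unfold utility
  rw [show ∀ a b d e : ℝ, lam₁ * a - lam₂ * b - (lam₁ * d - lam₂ * e)
      = lam₁ * (a - d) - lam₂ * (b - e) from fun a b d e => by ring]
  rw [hprofit, hcost]
  rw [mul_add]
  ring
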